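/- arXiv:0803.1749 — 2 statements merged into one kernel-verified Lean document; each statement's English description precedes it below -/
import Mathlib

section
/- (Surjectivity of F.) For every S ∈ S̃ there exist a μ-Cauchy sequence {B_n} in Ω and a strictly increasing function f : ℕ → ℕ with f(n) > n for all n such that lim_{n→∞} μ*(B_n △ limsup_k B_{f(k)}) = 0 and μ*( S △ limsup_k B_{f(k)} ) = 0; that is, every element of S̃ is almost everywhere equal to the limit superior of a subsequence of a μ-Cauchy sequence of sets from Ω. -/
/-!
`muStar Ω μ` is the outer measure induced by `μ`, so all of outer measure theory applies to it.
Given `B n → S` in `μ*`, pass to a subsequence `B (f k)` with `∑ μ*(B (f k) ∆ S) < ∞`. A point of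
`S ∆ limsup (B ∘ f)` lies in infinitely many `B (f k) ∆ S`, so by Borel–Cantelli this set is
`μ*`-null. Hence `L := limsup (B ∘ f)` is a.e. equal to `S`, and `μ*(B n ∆ L) = μ*(B n ∆ S) → 0`.
-/

open Filter Set Topology
open scoped symmDiff ENNReal

/-- `Ω` is an algebra of sets on `X`: it contains `∅` and is closed under
complements and finite unions. -/
def IsSetAlgebraOn {X : Type*} (Ω : Set (Set X)) : Prop :=
  ∅ ∈ Ω ∧ (∀ A ∈ Ω, Aᶜ ∈ Ω) ∧ (∀ A ∈ Ω, ∀ B ∈ Ω, A ∪ B ∈ Ω)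

/-- `μ` is a countably additive measure on the algebra `Ω`. -/
def IsCountablyAdditiveOn {X : Type*} (Ω : Set (Set X)) (μ : Set X → ℝ≥0∞) : Prop :=
  μ ∅ = 0 ∧ ∀ A : ℕ → Set X, (∀ i, A i ∈ Ω) → Pairwise (Function.onFun Disjoint A) →
    (⋃ i, A i) ∈ Ω → μ (⋃ i, A i) = ∑' i, μ (A i)

/-- The outer measure induced by `μ`:
`μ*(A) = inf { ∑ μ(Cᵢ) : A ⊆ ⋃ᵢ Cᵢ, Cᵢ ∈ Ω }`. -/
noncomputable def muStar {X : Type*} (Ω : Set (Set X)) (μ : Set X → ℝ≥0∞)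
    (A : Set X) : ℝ≥0∞ :=
  ⨅ (C : ℕ → Set X) (_ : ∀ i, C i ∈ Ω) (_ : A ⊆ ⋃ i, C i), ∑' i, μ (C i)

/-- A `μ`-Cauchy sequence in `Ω`: a sequence of members of `Ω` with
`μ(B n ∆ B m) → 0` as `n, m → ∞`. -/
def MuCauchy {X : Type*} (Ω : Set (Set X)) (μ : Set X → ℝ≥0∞) (B : ℕ → Set X) : Prop :=
  (∀ n, B n ∈ Ω) ∧ Tendsto (fun p : ℕ × ℕ => μ (B p.1 ∆ B p.2)) atTop (𝓝 0)

/-- `S̃`: the collection of subsets of `X` that are limits (in the pseudometric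
`d(A,B) = μ*(A ∆ B)`) of `μ`-Cauchy sequences from `Ω`. -/
def Stilde {X : Type*} (Ω : Set (Set X)) (μ : Set X → ℝ≥0∞) : Set (Set X) :=
  {S | ∃ B : ℕ → Set X, MuCauchy Ω μ B ∧
    Tendsto (fun n => muStar Ω μ (B n ∆ S)) atTop (𝓝 0)}

open MeasureTheory

section

variable {X : Type*}

theorem muStar_eq_inducedOuterMeasure {Ω : Set (Set X)} {μ : Set X → ℝ≥0∞} (hΩ : ∅ ∈ Ω)
    (hμ : μ ∅ = 0) :
    muStar Ω μ = ⇑(inducedOuterMeasure (fun s (_ : s ∈ Ω) => μ s) hΩ hμ) := by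
  funext A
  refine Eq.symm <| (OuterMeasure.ofFunction_eq_iInf_mem _ _
    (fun _ hs => extend_eq_top _ hs) A).trans ?_
  refine iInf_congr fun C => iInf_congr fun hC => iInf_congr fun _ => ?_
  exact tsum_congr fun i => extend_eq _ (hC i)

theorem Set.symmDiff_limsup_subset_limsup_symmDiff (S : Set X) (B : ℕ → Set X) :
    S ∆ limsup B atTop ⊆ limsup (fun n => B n ∆ S) atTop := by
  intro x hx
  simp only [Set.mem_symmDiff, mem_limsup_iff_frequently_mem] at hx ⊢
  rcases hx with ⟨hxS, hxB⟩ | ⟨hxB, hxS⟩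
  · exact (not_frequently.1 hxB).frequently.mono fun _ hx => Or.inr ⟨hxS, hx⟩
  · exact hxB.mono fun _ hx => Or.inl ⟨hx, hxS⟩

theorem ENNReal.exists_strictMono_tsum_comp_ne_top_of_tendsto_zero {u : ℕ → ℝ≥0∞}
    (hu : Tendsto u atTop (𝓝 0)) :
    ∃ f : ℕ → ℕ, StrictMono f ∧ (∀ n, n < f n) ∧ ∑' n, u (f n) ≠ ∞ := by
  have hpos : ∀ n : ℕ, 0 < (2⁻¹ : ℝ≥0∞) ^ n := fun n => ENNReal.pow_pos (by simp) n
  obtain ⟨f, hf, hfu⟩ := extraction_forall_of_eventually fun n =>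
    (eventually_gt_atTop n).and ((ENNReal.tendsto_nhds_zero.1 hu) _ (hpos n))
  refine ⟨f, hf, fun n => (hfu n).1,
    ne_top_of_le_ne_top ?_ (ENNReal.tsum_le_tsum fun n => (hfu n).2)⟩
  rw [ENNReal.tsum_geometric, ENNReal.one_sub_inv_two, inv_inv]
  exact ENNReal.ofNat_ne_top

section OuterMeasureClass

variable {F : Type*} [FunLike F (Set X) ℝ≥0∞] [OuterMeasureClass F X] {ν : F}

theorem exists_strictMono_measure_symmDiff_limsup_eq_zero {B : ℕ → Set X} {S : Set X}
    (hB : Tendsto (fun n => ν (B n ∆ S)) atTop (𝓝 0)) :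
    ∃ f : ℕ → ℕ, StrictMono f ∧ (∀ n, n < f n) ∧ ν (S ∆ limsup (B ∘ f) atTop) = 0 := by
  obtain ⟨f, hf, hlt, hsum⟩ := ENNReal.exists_strictMono_tsum_comp_ne_top_of_tendsto_zero hB
  exact ⟨f, hf, hlt, measure_mono_null (S.symmDiff_limsup_subset_limsup_symmDiff _)
    (measure_limsup_atTop_eq_zero hsum)⟩

theorem tendsto_measure_symmDiff_of_measure_symmDiff_eq_zero {B : ℕ → Set X} {S L : Set X}
    (hB : Tendsto (fun n => ν (B n ∆ S)) atTop (𝓝 0)) (hSL : ν (S ∆ L) = 0) :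
    Tendsto (fun n => ν (B n ∆ L)) atTop (𝓝 0) := by
  have hae : S =ᵐ[ν] L := measure_symmDiff_eq_zero_iff.1 hSL
  exact hB.congr fun n => measure_congr (ae_eq_set_symmDiff EventuallyEq.rfl hae)

end OuterMeasureClass

end

theorem stmt13_general {X : Type*} (Ω : Set (Set X)) (μ : Set X → ℝ≥0∞)
    (hΩ : IsSetAlgebraOn Ω) (hμ : IsCountablyAdditiveOn Ω μ)
    (S : Set X) (hS : S ∈ Stilde Ω μ) :
    ∃ B : ℕ → Set X, ∃ f : ℕ → ℕ, MuCauchy Ω μ B ∧ StrictMono f ∧ (∀ n, n < f n) ∧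
      Tendsto (fun n => muStar Ω μ (B n ∆ ⋂ m, ⋃ k, ⋃ (_ : m ≤ k), B (f k)))
        atTop (𝓝 0) ∧
      muStar Ω μ (S ∆ ⋂ m, ⋃ k, ⋃ (_ : m ≤ k), B (f k)) = 0 := by
  obtain ⟨B, hB, hBS⟩ := hS
  rw [muStar_eq_inducedOuterMeasure hΩ.1 hμ.1] at hBS ⊢
  obtain ⟨f, hf, hlt, hnull⟩ := exists_strictMono_measure_symmDiff_limsup_eq_zero hBS
  rw [limsup_eq_iInf_iSup_of_nat] at hnull
  exact ⟨B, f, hB, hf, hlt, tendsto_measure_symmDiff_of_measure_symmDiff_eq_zero hBS hnull, hnull⟩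

/-- surjectivity of F. -/
theorem stmt13 {X : Type*} (Ω : Set (Set X)) (μ : Set X → ℝ≥0∞)
    (hΩ : IsSetAlgebraOn Ω) (hμ : IsCountablyAdditiveOn Ω μ) (hfin : μ Set.univ ≠ ⊤)
    (S : Set X) (hS : S ∈ Stilde Ω μ) :
    ∃ B : ℕ → Set X, ∃ f : ℕ → ℕ, MuCauchy Ω μ B ∧ StrictMono f ∧ (∀ n, n < f n) ∧
      Tendsto (fun n => muStar Ω μ (B n ∆ ⋂ m, ⋃ k, ⋃ (_ : m ≤ k), B (f k)))
        atTop (𝓝 0) ∧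
      muStar Ω μ (S ∆ ⋂ m, ⋃ k, ⋃ (_ : m ≤ k), B (f k)) = 0 :=
  stmt13_general Ω μ hΩ hμ S hS
end

section
/- (Characterization of measurable sets as limit points of μ-Cauchy sequences.) A subset E ⊆ X is Carathéodory measurable with respect to μ* (i.e., μ*(A) = μ*(A ∩ E) + μ*(A ∩ Eᶜ) for every A ⊆ X) if and only if E ∈ S̃, i.e., there exists a μ-Cauchy sequence {B_n} in Ω with lim_{n→∞} μ*(B_n △ E) = 0. -/
open Filter Set Topology
open scoped symmDiff ENNReal

/-!
The outer measure `μ*` is the one induced by the countably additive content `μ`, so by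
Carathéodory's extension theorem it agrees with `μ` on `Ω` and every member of `Ω` is
`μ*`-measurable. Measurability is closed in the pseudometric `μ*(A ∆ B)`: splitting a test set
along `E` instead of along a measurable `B` costs at most `2 μ*(B ∆ E)`. Conversely, a measurable
`E` (of finite outer measure, as `μ X < ∞`) is covered by `⋃ Cᵢ` with `∑ μ(Cᵢ)` close to
`μ*(E)`; measurability makes `μ*((⋃ Cᵢ) \ E)` small, and a finite partial union approximates `E`.
Approximants of `E` are `μ`-Cauchy by the triangle inequality for `∆`.
-/

open MeasureTheory

namespace MeasureTheory.OuterMeasure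

variable {α ι : Type*} (m : OuterMeasure α) {l : Filter ι} {B : ι → Set α} {E : Set α}

theorem tendsto_symmDiff_prod_of_tendsto_symmDiff (h : Tendsto (fun i ↦ m (B i ∆ E)) l (𝓝 0)) :
    Tendsto (fun p : ι × ι ↦ m (B p.1 ∆ B p.2)) (l ×ˢ l) (𝓝 0) := by
  have hsum : Tendsto (fun p : ι × ι ↦ m (B p.1 ∆ E) + m (E ∆ B p.2)) (l ×ˢ l) (𝓝 0) := by
    simpa only [symmDiff_comm E, add_zero, Function.comp_apply] using
      (h.comp tendsto_fst).add (h.comp tendsto_snd)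
  refine tendsto_of_tendsto_of_tendsto_of_le_of_le tendsto_const_nhds hsum (fun _ ↦ zero_le)
    fun p ↦ ?_
  exact (m.mono (symmDiff_triangle _ E _)).trans (measure_union_le _ _)

theorem isCaratheodory_of_tendsto_symmDiff [l.NeBot] (hB : ∀ i, m.IsCaratheodory (B i))
    (h : Tendsto (fun i ↦ m (B i ∆ E)) l (𝓝 0)) : m.IsCaratheodory E := by
  refine (isCaratheodory_iff_le' m).2 fun A ↦ ?_
  have hA : ∀ i, m (A ∩ E) + m (A \ E) ≤ m A + (m (B i ∆ E) + m (B i ∆ E)) := fun i ↦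
    calc m (A ∩ E) + m (A \ E)
        ≤ (m (A ∩ B i) + m (B i ∆ E)) + (m (A \ B i) + m (B i ∆ E)) := by
          gcongr <;> refine (m.mono fun x hx ↦ ?_).trans (measure_union_le _ _)
          · by_cases hxB : x ∈ B i
            · exact .inl ⟨hx.1, hxB⟩
            · exact .inr (.inr ⟨hx.2, hxB⟩)
          · by_cases hxB : x ∈ B i
            · exact .inr (.inl ⟨hxB, hx.2⟩)
            · exact .inl ⟨hx.1, hxB⟩
      _ = m A + (m (B i ∆ E) + m (B i ∆ E)) := by rw [hB i A]; ring
  have hlim : Tendsto (fun i ↦ m A + (m (B i ∆ E) + m (B i ∆ E))) l (𝓝 (m A)) := by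
    simpa using tendsto_const_nhds.add (h.add h)
  exact ge_of_tendsto' hlim hA

end MeasureTheory.OuterMeasure

theorem IsSetAlgebraOn.isSetAlgebra {X : Type*} {Ω : Set (Set X)} (hΩ : IsSetAlgebraOn Ω) :
    IsSetAlgebra Ω :=
  ⟨hΩ.1, fun A hA ↦ hΩ.2.1 A hA, fun A B hA hB ↦ hΩ.2.2 A hA B hB⟩

namespace IsCountablyAdditiveOn

variable {X : Type*} {Ω : Set (Set X)} {μ : Set X → ℝ≥0∞}

theorem union_eq (hμ : IsCountablyAdditiveOn Ω μ) (hΩ₀ : ∅ ∈ Ω) {A B : Set X} (hA : A ∈ Ω)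
    (hB : B ∈ Ω) (hAB : A ∪ B ∈ Ω) (hd : Disjoint A B) : μ (A ∪ B) = μ A + μ B := by
  let C : ℕ → Set X := fun n ↦ if n = 0 then A else if n = 1 then B else ∅
  have hC : ⋃ n, C n = A ∪ B := by
    ext x
    simp only [mem_iUnion, mem_union]
    constructor
    · rintro ⟨_ | _ | n, hx⟩ <;> simp_all [C]
    · rintro (hx | hx)
      exacts [⟨0, by simpa [C]⟩, ⟨1, by simpa [C]⟩]
  have hCdisj : Pairwise (Function.onFun Disjoint C) := by
    rintro (_ | _ | i) (_ | _ | j) hij <;> simp_all [C, Function.onFun, hd.symm]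
  have hsum := hμ.2 C (fun n ↦ by dsimp only [C]; split_ifs <;> assumption) hCdisj (hC ▸ hAB)
  rw [← hC, hsum, tsum_eq_sum (s := Finset.range 2) fun n hn ↦ ?_]
  · simp [Finset.sum_range_succ, C]
  · rcases n with _ | _ | n <;> simp_all [C, hμ.1]

noncomputable def addContent (hμ : IsCountablyAdditiveOn Ω μ) (hΩ : IsSetRing Ω) :
    AddContent ℝ≥0∞ Ω :=
  hΩ.addContent_of_union μ hμ.1 fun hA hB hd ↦
    hμ.union_eq hΩ.empty_mem hA hB (hΩ.union_mem hA hB) hd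

@[simp]
theorem addContent_apply (hμ : IsCountablyAdditiveOn Ω μ) (hΩ : IsSetRing Ω) (A : Set X) :
    hμ.addContent hΩ A = μ A :=
  rfl

theorem isSigmaSubadditive_addContent (hμ : IsCountablyAdditiveOn Ω μ) (hΩ : IsSetRing Ω) :
    (hμ.addContent hΩ).IsSigmaSubadditive :=
  isSigmaSubadditive_of_addContent_iUnion_eq_tsum hΩ fun C hC hCU hd ↦ hμ.2 C hC hd hCU

end IsCountablyAdditiveOn

section muStar

variable {X : Type*} {Ω : Set (Set X)} {μ : Set X → ℝ≥0∞}

noncomputable def muStarOuter (hΩ₀ : ∅ ∈ Ω) (hμ₀ : μ ∅ = 0) : OuterMeasure X :=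
  inducedOuterMeasure (fun s (_ : s ∈ Ω) ↦ μ s) hΩ₀ hμ₀

theorem coe_muStarOuter (hΩ₀ : ∅ ∈ Ω) (hμ₀ : μ ∅ = 0) :
    ⇑(muStarOuter hΩ₀ hμ₀) = muStar Ω μ := by
  ext A
  rw [muStarOuter, inducedOuterMeasure, OuterMeasure.ofFunction_eq_iInf_mem _ _
    fun s hs ↦ extend_eq_top _ hs]
  refine iInf_congr fun C ↦ iInf_congr fun hC ↦ iInf_congr fun _ ↦ ?_
  exact tsum_congr fun i ↦ extend_eq _ (hC i)

theorem muStar_le_tsum {A : Set X} {C : ℕ → Set X} (hC : ∀ i, C i ∈ Ω) (hAC : A ⊆ ⋃ i, C i) :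
    muStar Ω μ A ≤ ∑' i, μ (C i) :=
  iInf_le_of_le C <| iInf_le_of_le hC <| iInf_le _ hAC

theorem muStar_eq_of_mem (hΩ : IsSetRing Ω) (hμ : IsCountablyAdditiveOn Ω μ) {A : Set X}
    (hA : A ∈ Ω) : muStar Ω μ A = μ A := by
  rw [← coe_muStarOuter hΩ.empty_mem hμ.1, muStarOuter]
  simpa only [IsCountablyAdditiveOn.addContent_apply] using
    AddContent.inducedOuterMeasure_eq hΩ.isSetSemiring _ (hμ.isSigmaSubadditive_addContent hΩ) hA

theorem isCaratheodory_muStarOuter_of_mem (hΩ : IsSetRing Ω) (hμ : IsCountablyAdditiveOn Ω μ)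
    {A : Set X} (hA : A ∈ Ω) : (muStarOuter hΩ.empty_mem hμ.1).IsCaratheodory A :=
  AddContent.isCaratheodory_inducedOuterMeasure_of_mem hΩ.isSetSemiring (hμ.addContent hΩ) hA

theorem exists_mem_muStarOuter_symmDiff_lt (hΩ : IsSetRing Ω) (hμ₀ : μ ∅ = 0) {E : Set X}
    (hE : (muStarOuter hΩ.empty_mem hμ₀).IsCaratheodory E)
    (hEfin : muStarOuter hΩ.empty_mem hμ₀ E ≠ ∞) {ε : ℝ≥0∞} (hε : 0 < ε) :
    ∃ B ∈ Ω, muStarOuter hΩ.empty_mem hμ₀ (B ∆ E) < ε := by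
  set ν := muStarOuter hΩ.empty_mem hμ₀
  have hν : ⇑ν = muStar Ω μ := coe_muStarOuter hΩ.empty_mem hμ₀
  have hε₂ : 0 < ε / 2 := ENNReal.half_pos hε.ne'
  obtain ⟨C, hC, hEC, hCsum⟩ : ∃ C : ℕ → Set X, (∀ i, C i ∈ Ω) ∧ E ⊆ ⋃ i, C i ∧
      ∑' i, μ (C i) < ν E + ε / 2 := by
    have h := ENNReal.lt_add_right hEfin hε₂.ne'
    nth_rw 1 [hν, muStar] at h
    simpa only [iInf_lt_iff, exists_prop] using h
  have hUE : ν ((⋃ i, C i) \ E) < ε / 2 := by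
    rw [← ENNReal.add_lt_add_iff_left hEfin]
    calc ν E + ν ((⋃ i, C i) \ E) = ν (⋃ i, C i) := by rw [hE (⋃ i, C i), inter_eq_right.2 hEC]
      _ ≤ ∑' i, μ (C i) := hν ▸ muStar_le_tsum hC subset_rfl
      _ < ν E + ε / 2 := hCsum
  obtain ⟨N, hN⟩ : ∃ N, ∑' k, μ (C (k + N)) < ε / 2 :=
    ((ENNReal.tendsto_sum_nat_add _ (hCsum.trans_le le_top).ne).eventually_lt_const hε₂).exists
  set B := ⋃ i ∈ Finset.range N, C i
  refine ⟨B, hΩ.biUnion_mem _ fun i _ ↦ hC i, ?_⟩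
  have hBE : ν (B \ E) < ε / 2 := by
    refine (measure_mono (sdiff_subset_sdiff_left ?_)).trans_lt hUE
    exact iUnion₂_subset fun i _ ↦ subset_iUnion C i
  have hEB : ν (E \ B) < ε / 2 := by
    refine lt_of_le_of_lt (hν ▸ muStar_le_tsum (fun k ↦ hC (k + N)) fun x ⟨hxE, hxB⟩ ↦ ?_) hN
    obtain ⟨i, hi⟩ := mem_iUnion.1 (hEC hxE)
    have hNi : N ≤ i := by
      by_contra! hiN
      exact hxB (mem_biUnion (Finset.mem_range.2 hiN) hi)
    exact mem_iUnion.2 ⟨i - N, by rwa [Nat.sub_add_cancel hNi]⟩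
  calc ν (B ∆ E) ≤ ν (B \ E) + ν (E \ B) := measure_union_le _ _
    _ < ε / 2 + ε / 2 := ENNReal.add_lt_add hBE hEB
    _ = ε := ENNReal.add_halves ε

end muStar

theorem ENNReal.exists_seq_tendsto_zero_of_forall_lt {α : Type*} {s : Set α} {f : α → ℝ≥0∞}
    (h : ∀ ε > 0, ∃ a ∈ s, f a < ε) :
    ∃ a : ℕ → α, (∀ n, a n ∈ s) ∧ Tendsto (fun n ↦ f (a n)) atTop (𝓝 0) := by
  choose a ha hfa using fun n : ℕ ↦ h ((n : ℝ≥0∞) + 1)⁻¹ (ENNReal.inv_pos.2 (by simp))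
  refine ⟨a, ha, tendsto_of_tendsto_of_tendsto_of_le_of_le tendsto_const_nhds ?_
    (fun _ ↦ zero_le) fun n ↦ (hfa n).le⟩
  simpa [Function.comp_def] using
    ENNReal.tendsto_inv_nat_nhds_zero.comp (tendsto_add_atTop_nat 1)

/-- measurable sets are exactly the limit points of μ-Cauchy sequences. -/
theorem stmt14 {X : Type*} (Ω : Set (Set X)) (μ : Set X → ℝ≥0∞)
    (hΩ : IsSetAlgebraOn Ω) (hμ : IsCountablyAdditiveOn Ω μ) (hfin : μ Set.univ ≠ ⊤)
    (E : Set X) :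
    (∀ A : Set X, muStar Ω μ A = muStar Ω μ (A ∩ E) + muStar Ω μ (A ∩ Eᶜ)) ↔
      E ∈ Stilde Ω μ := by
  have hR : IsSetRing Ω := hΩ.isSetAlgebra.isSetRing
  set ν := muStarOuter hR.empty_mem hμ.1
  have hν : ⇑ν = muStar Ω μ := coe_muStarOuter hR.empty_mem hμ.1
  rw [← hν]
  constructor
  · intro hE
    have hEfin : ν E ≠ ∞ := by
      refine ne_top_of_le_ne_top ?_ (measure_mono (subset_univ E))
      rwa [hν, muStar_eq_of_mem hR hμ hΩ.isSetAlgebra.univ_mem]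
    obtain ⟨B, hBΩ, hB⟩ := ENNReal.exists_seq_tendsto_zero_of_forall_lt fun ε hε ↦
      exists_mem_muStarOuter_symmDiff_lt hR hμ.1 hE hEfin hε
    have hBB := ν.tendsto_symmDiff_prod_of_tendsto_symmDiff hB
    rw [prod_atTop_atTop_eq, hν] at hBB
    rw [hν] at hB
    refine ⟨B, ⟨hBΩ, hBB.congr fun p ↦ muStar_eq_of_mem hR hμ ?_⟩, hB⟩
    exact hR.union_mem (hR.sdiff_mem (hBΩ _) (hBΩ _)) (hR.sdiff_mem (hBΩ _) (hBΩ _))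
  · rintro ⟨B, ⟨hBΩ, -⟩, hB⟩
    rw [← hν] at hB
    exact ν.isCaratheodory_of_tendsto_symmDiff
      (fun n ↦ isCaratheodory_muStarOuter_of_mem hR hμ (hBΩ n)) hB
end
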